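/- arXiv:1507.00401 — 3 statements merged into one kernel-verified Lean document; each statement's English description precedes it below -/
import Mathlib

section
/- Let G be a finite group and ℓ a prime such that ℓ divides |G| but ℓ² does not. Let S be a Sylow ℓ-subgroup of G and N = N_G(S) its normalizer. Call an element of a finite group ℓ-singular if ℓ divides its order. Then the inclusion N ↪ G induces a bijection between the set of ℓ-singular conjugacy classes of N and the set of ℓ-singular conjugacy classes of G. -/
section Aux

variable {G : Type*} [Group G]

/-- If `g` conjugates a generator of `H` to a generator of `H`, then `g` normalizes `H`. -/
lemma aux_norm_of_conj_gen {g s t : G} (hst : g * s * g⁻¹ = t) {H : Subgroup G}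
    (hs : Subgroup.zpowers s = H) (ht : Subgroup.zpowers t = H) : g ∈ Subgroup.normalizer (H : Set G) := by
  rw [Subgroup.mem_normalizer_iff]
  intro h
  constructor
  · intro hh
    rw [← hs, Subgroup.mem_zpowers_iff] at hh
    obtain ⟨k, rfl⟩ := hh
    rw [← ht, Subgroup.mem_zpowers_iff]
    exact ⟨k, by rw [← hst, conj_zpow]⟩
  · intro hh
    rw [← ht, Subgroup.mem_zpowers_iff] at hh
    obtain ⟨k, hk⟩ := hh
    rw [← hst, conj_zpow] at hk
    rw [← hs, Subgroup.mem_zpowers_iff]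
    exact ⟨k, mul_left_cancel (mul_right_cancel hk)⟩

lemma aux_sub_eq_of_le_card [Finite G] {H K : Subgroup G} (h : H ≤ K)
    (hc : Nat.card K ≤ Nat.card H) : H = K :=
  ((SetLike.coe_injective (Set.eq_of_subset_of_ncard_le h
    (by rw [← Nat.card_coe_set_eq, ← Nat.card_coe_set_eq]; exact hc) (Set.toFinite _))))

lemma aux_orderOf_conj {g x y : G} (h : g * x * g⁻¹ = y) : orderOf y = orderOf x := by
  subst h
  exact orderOf_injective (MulAut.conj g).toMonoidHom (MulAut.conj g).injective x

variable [Fintype G] (ℓ : ℕ) [Fact ℓ.Prime]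

lemma aux_card_S (h1 : ℓ ∣ Fintype.card G) (h2 : ¬ ℓ ^ 2 ∣ Fintype.card G) (S : Sylow ℓ G) :
    Nat.card (S : Subgroup G) = ℓ := by
  have hp : ℓ.Prime := Fact.out
  have hcard := S.card_eq_multiplicity
  have hf : (Nat.card G).factorization ℓ = 1 := by
    have hpos : Nat.card G ≠ 0 := Nat.card_pos.ne'
    have h1' : ℓ ^ 1 ∣ Nat.card G := by simpa [Nat.card_eq_fintype_card] using h1
    have h2' : ¬ ℓ ^ 2 ∣ Nat.card G := by simpa [Nat.card_eq_fintype_card] using h2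
    have hle : 1 ≤ (Nat.card G).factorization ℓ :=
      (Nat.Prime.pow_dvd_iff_le_factorization hp hpos).mp h1'
    have hlt : (Nat.card G).factorization ℓ < 2 := by
      by_contra hcon
      exact h2' ((Nat.Prime.pow_dvd_iff_le_factorization hp hpos).mpr (not_lt.mp hcon))
    omega
  rw [hcard, hf, pow_one]

/-- The order-`ℓ` power of an `ℓ`-singular element. -/
lemma aux_orderOf_pow {x : G} (hx : ℓ ∣ orderOf x) :
    orderOf (x ^ (orderOf x / ℓ)) = ℓ := by
  have hp : ℓ.Prime := Fact.out
  have hn : orderOf x ≠ 0 := (orderOf_pos x).ne'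
  have hq : orderOf x / ℓ ∣ orderOf x := Nat.div_dvd_of_dvd hx
  rw [orderOf_pow, Nat.gcd_eq_right hq, Nat.div_div_self hx hn]

omit [Fintype G] [Fact ℓ.Prime] in
/-- An element of order `ℓ` in the normalizer of `S` lies in `S`. -/
lemma aux_mem_S (S : Sylow ℓ G) {s : G} (hs : orderOf s = ℓ)
    (hn : s ∈ Subgroup.normalizer ((S : Subgroup G) : Set G)) : s ∈ (S : Subgroup G) := by
  have hP : IsPGroup ℓ (Subgroup.zpowers s) :=
    IsPGroup.of_card (n := 1) (by rw [Nat.card_zpowers, hs, pow_one])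
  have hle : Subgroup.zpowers s ≤ Subgroup.normalizer ((S : Subgroup G) : Set G) := Subgroup.zpowers_le.mpr hn
  have : Subgroup.zpowers s ⊓ Subgroup.normalizer ((S : Subgroup G) : Set G) = Subgroup.zpowers s ⊓ (S : Subgroup G) := hP.inf_normalizer_sylow S
  rw [inf_of_le_left hle] at this
  have : Subgroup.zpowers s ≤ (S : Subgroup G) := by
    rw [this]; exact inf_le_right
  exact this (Subgroup.mem_zpowers s)

/-- A nontrivial element of `S` generates `S` when `|S| = ℓ`. -/
lemma aux_zpowers_eq (h1 : ℓ ∣ Fintype.card G) (h2 : ¬ ℓ ^ 2 ∣ Fintype.card G) (S : Sylow ℓ G)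
    {s : G} (hs : orderOf s = ℓ) (hmem : s ∈ (S : Subgroup G)) :
    Subgroup.zpowers s = (S : Subgroup G) := by
  refine aux_sub_eq_of_le_card (Subgroup.zpowers_le.mpr hmem) ?_
  rw [Nat.card_zpowers, hs, aux_card_S ℓ h1 h2 S]

end Aux

/-- If `ℓ` divides `|G|` exactly once and `S` is a Sylow `ℓ`-subgroup with
normalizer `N`, then the inclusion `N ↪ G` induces a bijection between the `ℓ`-singular
conjugacy classes of `N` and those of `G`. -/
theorem stmt1 {G : Type*} [Group G] [Fintype G] (ℓ : ℕ) [Fact ℓ.Prime]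
    (h1 : ℓ ∣ Fintype.card G) (h2 : ¬ ℓ ^ 2 ∣ Fintype.card G)
    (S : Sylow ℓ G) :
    Set.BijOn (ConjClasses.map ((Subgroup.normalizer ((S : Subgroup G) : Set G)).subtype))
      {c : ConjClasses (Subgroup.normalizer ((S : Subgroup G) : Set G)) | ∃ x, ConjClasses.mk x = c ∧ ℓ ∣ orderOf x}
      {c : ConjClasses G | ∃ x, ConjClasses.mk x = c ∧ ℓ ∣ orderOf x} := by
  have hp : ℓ.Prime := Fact.out
  set N := Subgroup.normalizer ((S : Subgroup G) : Set G) with hN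
  refine ⟨?_, ?_, ?_⟩
  · -- MapsTo
    rintro c ⟨x, rfl, hx⟩
    exact ⟨(x : G), rfl, by rwa [Subgroup.orderOf_coe]⟩
  · -- InjOn
    rintro c1 ⟨x, rfl, hx⟩ c2 ⟨y, rfl, hy⟩ hmap
    have hconj : IsConj (x : G) (y : G) := ConjClasses.mk_eq_mk_iff_isConj.mp hmap
    obtain ⟨g, hg⟩ := isConj_iff.mp hconj
    -- orders
    have hxc : ℓ ∣ orderOf (x : G) := by rwa [Subgroup.orderOf_coe]
    have hyc : ℓ ∣ orderOf (y : G) := by rwa [Subgroup.orderOf_coe]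
    have horder : orderOf (y : G) = orderOf (x : G) := aux_orderOf_conj hg
    -- the order-ℓ powers
    set sx : G := (x : G) ^ (orderOf (x : G) / ℓ) with hsx
    set sy : G := (y : G) ^ (orderOf (y : G) / ℓ) with hsy
    have hsxo : orderOf sx = ℓ := aux_orderOf_pow ℓ hxc
    have hsyo : orderOf sy = ℓ := aux_orderOf_pow ℓ hyc
    have hsxN : sx ∈ N := pow_mem x.2 _
    have hsyN : sy ∈ N := pow_mem y.2 _
    have hsxS : sx ∈ (S : Subgroup G) := aux_mem_S ℓ S hsxo hsxN
    have hsyS : sy ∈ (S : Subgroup G) := aux_mem_S ℓ S hsyo hsyN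
    have hconjs : g * sx * g⁻¹ = sy := by
      rw [hsx, hsy, horder, ← conj_pow, hg]
    have hgN : g ∈ N :=
      aux_norm_of_conj_gen hconjs (aux_zpowers_eq ℓ h1 h2 S hsxo hsxS)
        (aux_zpowers_eq ℓ h1 h2 S hsyo hsyS)
    refine ConjClasses.mk_eq_mk_iff_isConj.mpr (isConj_iff.mpr ⟨⟨g, hgN⟩, ?_⟩)
    ext
    exact hg
  · -- SurjOn
    rintro c ⟨x, rfl, hx⟩
    set s : G := x ^ (orderOf x / ℓ) with hs
    have hso : orderOf s = ℓ := aux_orderOf_pow ℓ hx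
    have hP : IsPGroup ℓ (Subgroup.zpowers s) :=
      IsPGroup.of_card (n := 1) (by rw [Nat.card_zpowers, hso, pow_one])
    obtain ⟨Q, hQ⟩ := hP.exists_le_sylow
    obtain ⟨g, hg⟩ := MulAction.exists_smul_eq G Q S
    have hsS : g * s * g⁻¹ ∈ (S : Subgroup G) := by
      rw [← hg]
      exact Subgroup.smul_mem_pointwise_smul _ _ _ (hQ (Subgroup.mem_zpowers s))
    set y : G := g * x * g⁻¹ with hy
    have hconjs : g * s * g⁻¹ = y ^ (orderOf x / ℓ) := by rw [hs, hy, ← conj_pow]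
    have hyo : orderOf y = orderOf x := aux_orderOf_conj rfl
    have hso' : orderOf (g * s * g⁻¹) = ℓ := by rw [aux_orderOf_conj rfl, hso]
    -- y commutes with g * s * g⁻¹, which generates S
    have hcomm : Commute y (g * s * g⁻¹) := by
      rw [hconjs]
      exact (Commute.refl y).pow_right _
    have hgen : Subgroup.zpowers (g * s * g⁻¹) = (S : Subgroup G) :=
      aux_zpowers_eq ℓ h1 h2 S hso' hsS
    have hyN : y ∈ Subgroup.normalizer ((S : Subgroup G) : Set G) :=
      aux_norm_of_conj_gen (by rw [hcomm.eq, mul_assoc, mul_inv_cancel, mul_one]) hgen hgen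
    refine ⟨ConjClasses.mk (⟨y, hyN⟩ : N), ⟨⟨y, hyN⟩, rfl, ?_⟩, ?_⟩
    · rw [Subgroup.orderOf_mk, hyo]; exact hx
    · show ConjClasses.mk y = ConjClasses.mk x
      exact ConjClasses.mk_eq_mk_iff_isConj.mpr (isConj_iff.mpr ⟨g, rfl⟩).symm
end

section
/- Let ℓ be a prime and n ≥ 2. There exists a proper Young subgroup of the symmetric group S_n (i.e., a subgroup of the form S_{λ_1} × ⋯ × S_{λ_r} for a composition λ of n with r ≥ 2 parts) containing a Sylow ℓ-subgroup of S_n if and only if n is not a power of ℓ. -/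
/-!
A subgroup `H` of a finite group contains a Sylow `ℓ`-subgroup exactly when `ℓ ∤ [G : H]`.
Every proper Young subgroup lies in a two-block one `S_a × S_{n-a}` with `0 < a < n`, whose index
is `n.choose a`. If `n = ℓ^k`, all these binomial coefficients are divisible by `ℓ`. Otherwise,
for `a` the `ℓ`-part of `n`, Lucas' theorem gives `n.choose a ≡ n / a ≢ 0 [MOD ℓ]`.
-/

open Nat Equiv

/-- The index of the block (of the partition of `{0, …, n-1}` into consecutive intervals of
sizes `lam 0, lam 1, …`) containing `i`. -/
def blockOf (lam : List ℕ) (i : ℕ) : ℕ :=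
  ((List.range lam.length).filter fun j => (lam.take (j + 1)).sum ≤ i).length

/-- The Young subgroup of `S_n` associated to a composition `lam` of `n`: the permutations
preserving each consecutive block. -/
def youngSubgroup (n : ℕ) (lam : List ℕ) : Subgroup (Equiv.Perm (Fin n)) where
  carrier := {σ | ∀ i : Fin n, blockOf lam (σ i) = blockOf lam i}
  one_mem' := fun _ => rfl
  mul_mem' := by
    intro σ τ hσ hτ i
    simpa [Equiv.Perm.mul_apply] using (hσ (τ i)).trans (hτ i)
  inv_mem' := by
    intro σ hσ i
    simpa [Equiv.Perm.coe_inv, Equiv.apply_symm_apply] using (hσ (σ⁻¹ i)).symm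

theorem Sylow.exists_le_iff_not_dvd_index {p : ℕ} [Fact p.Prime] {G : Type*} [Group G]
    [Finite G] {H : Subgroup G} : (∃ P : Sylow p G, P ≤ H) ↔ ¬ p ∣ H.index := by
  constructor
  · rintro ⟨P, hP⟩ hdvd
    exact P.not_dvd_index (hdvd.trans (Subgroup.index_dvd_of_le hP))
  · intro hH
    obtain ⟨Q⟩ : Nonempty (Sylow p H) := inferInstance
    have hQ : ¬ p ∣ (Q.map H.subtype).index := by
      rw [Subgroup.index_map_subtype]
      exact (Fact.out : p.Prime).not_dvd_mul Q.not_dvd_index hH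
    exact ⟨(Q.2.map H.subtype).toSylow hQ, Subgroup.map_subtype_le _⟩

theorem Nat.Prime.not_dvd_choose_ordProj {p n : ℕ} (hp : p.Prime) (hn : n ≠ 0) :
    ¬ p ∣ n.choose (ordProj[p] n) := by
  have := Fact.mk hp
  have hmod := Choose.choose_pow_mul_pow_mul_modEq_choose_nat (p := p) (k := n.factorization p)
    (a := ordCompl[p] n) (b := 1)
  rw [ordProj_mul_ordCompl_eq_self, mul_one, choose_one_right] at hmod
  rw [Nat.dvd_iff_mod_eq_zero, hmod, ← Nat.dvd_iff_mod_eq_zero]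
  exact not_dvd_ordCompl hp hn

lemma blockOf_cons_eq_zero_iff (a : ℕ) (rest : List ℕ) (x : ℕ) :
    blockOf (a :: rest) x = 0 ↔ x < a := by
  simp only [blockOf, List.length_eq_zero_iff, List.filter_eq_nil_iff, List.mem_range,
    decide_eq_true_eq]
  simp only [List.take_succ_cons, List.sum_cons, List.length_cons]
  refine ⟨fun h => by simpa using h 0 (by omega), fun hx j _ => by omega⟩

lemma blockOf_pair (m j x : ℕ) :
    blockOf [m, j] x = (if m ≤ x then 1 else 0) + (if m + j ≤ x then 1 else 0) := by
  simp [blockOf, List.range_succ, List.filter_cons]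
  split_ifs <;> simp

section pair

variable {m j n : ℕ} (h : m + j = n)
include h

lemma mem_youngSubgroup_pair_iff {σ : Perm (Fin n)} :
    σ ∈ youngSubgroup n [m, j] ↔ ∀ i, ((σ i : ℕ) < m ↔ (i : ℕ) < m) := by
  refine forall_congr' fun i => ?_
  have hσi := (σ i).isLt
  have hi := i.isLt
  simp only [blockOf_pair]
  split_ifs <;> omega

lemma card_youngSubgroup_pair : Nat.card (youngSubgroup n [m, j]) = m ! * j ! := by
  let f : Fin n → Bool := fun i => decide ((i : ℕ) < m)
  have hcard :
      Nat.card (youngSubgroup n [m, j]) = Fintype.card {σ : Perm (Fin n) // f ∘ σ = f} := by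
    rw [← Nat.card_eq_fintype_card]
    refine Nat.card_congr (Equiv.subtypeEquivRight fun σ => ?_)
    rw [mem_youngSubgroup_pair_iff h, funext_iff]
    simp [f]
  rw [hcard, DomMulAct.stabilizer_card, Fintype.prod_bool]
  simp only [f, decide_eq_true_iff, decide_eq_false_iff_not]
  rw [Fintype.card_subtype_compl, Fintype.card_fin_lt_of_le (by omega), Fintype.card_fin]
  congr 2
  omega

lemma index_youngSubgroup_pair : (youngSubgroup n [m, j]).index = n.choose m := by
  have := (youngSubgroup n [m, j]).card_mul_index
  rw [card_youngSubgroup_pair h, Nat.card_perm, Nat.card_fin, ← h,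
    ← Nat.add_choose_mul_factorial_mul_factorial] at this
  rw [← h, Nat.choose_symm_add]
  exact Nat.eq_of_mul_eq_mul_left (by positivity) (this.trans (by ring))

end pair

lemma youngSubgroup_cons_le_pair {n a : ℕ} {rest : List ℕ} (hsum : a + rest.sum = n) :
    youngSubgroup n (a :: rest) ≤ youngSubgroup n [a, rest.sum] := by
  intro σ hσ
  rw [mem_youngSubgroup_pair_iff hsum]
  intro i
  rw [← blockOf_cons_eq_zero_iff a rest, ← blockOf_cons_eq_zero_iff a rest, hσ i]

/-- For `n ≥ 2`, there is a proper Young subgroup of `S_n` containing a Sylow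
`ℓ`-subgroup of `S_n` if and only if `n` is not a power of `ℓ`. -/
theorem stmt5 (ℓ n : ℕ) (hℓ : ℓ.Prime) (hn : 2 ≤ n) :
    (∃ lam : List ℕ, (∀ x ∈ lam, 0 < x) ∧ lam.sum = n ∧ 2 ≤ lam.length ∧
        ∃ S : Sylow ℓ (Equiv.Perm (Fin n)), (S : Subgroup (Equiv.Perm (Fin n))) ≤
          youngSubgroup n lam) ↔
      ¬ ∃ k : ℕ, n = ℓ ^ k := by
  have := Fact.mk hℓ
  constructor
  · rintro ⟨_ | ⟨a, rest⟩, hpos, hsum, hlen, S, hS⟩ ⟨k, rfl⟩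
    · simp at hlen
    have ha : 0 < a := hpos a List.mem_cons_self
    have hrest : 0 < rest.sum :=
      rest.sum_pos (fun x hx => hpos x (List.mem_cons_of_mem a hx)) (by rintro rfl; simp at hlen)
    have hsum' : a + rest.sum = ℓ ^ k := by simpa using hsum
    have hidx := Sylow.exists_le_iff_not_dvd_index.mp
      ⟨S, hS.trans (youngSubgroup_cons_le_pair hsum')⟩
    rw [index_youngSubgroup_pair hsum'] at hidx
    exact hidx (hℓ.dvd_choose_pow ha.ne' (by omega))
  · intro hnp
    set m := ordProj[ℓ] n
    have hm : m < n := (ordProj_le ℓ (by omega)).lt_of_ne fun h => hnp ⟨_, h.symm⟩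
    have hsplit : m + (n - m) = n := by omega
    obtain ⟨S, hS⟩ := Sylow.exists_le_iff_not_dvd_index.mpr <| by
      rw [index_youngSubgroup_pair hsplit]
      exact hℓ.not_dvd_choose_ordProj (by omega)
    refine ⟨[m, n - m], ?_, by simpa using hsplit, by simp, S, hS⟩
    simp only [List.mem_cons, List.not_mem_nil, or_false]
    rintro x (rfl | rfl) <;> [exact pow_pos hℓ.pos _; omega]
end

section
/- Let O be a complete discrete valuation ring with residue field k, let G be a finite group, and let M be an O[G]-module that is finitely generated and free as an O-module. If End_{k[G]}(k ⊗_O M) = k (i.e., the reduction of M is absolutely irreducible, so its endomorphism algebra consists only of scalars), then End_{O[G]}(M) = O, i.e., every O[G]-endomorphism of M is multiplication by a scalar in O. -/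
open TensorProduct

/-- Let `O` be a complete discrete valuation ring with residue field `k`, `G` a
finite group, and `M` an `O[G]`-module (given by a representation `ρ : G → GL_O(M)`) that is
finitely generated and free over `O`. If every `k[G]`-endomorphism of the reduction
`k ⊗_O M` is a scalar, then every `O[G]`-endomorphism of `M` is a scalar in `O`. -/
theorem stmt12 (O : Type*) [CommRing O] [IsDomain O] [IsDiscreteValuationRing O]
    [IsAdicComplete (IsLocalRing.maximalIdeal O) O]
    (G : Type*) [Group G] [Finite G]
    (M : Type*) [AddCommGroup M] [Module O M] [Module.Finite O M] [Module.Free O M]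
    (ρ : Representation O G M)
    (habs : ∀ F : (IsLocalRing.ResidueField O ⊗[O] M) →ₗ[IsLocalRing.ResidueField O]
        (IsLocalRing.ResidueField O ⊗[O] M),
      (∀ g : G, F ∘ₗ (ρ g).baseChange (IsLocalRing.ResidueField O)
          = (ρ g).baseChange (IsLocalRing.ResidueField O) ∘ₗ F) →
      ∃ c : IsLocalRing.ResidueField O, F = c • LinearMap.id) :
    ∀ f : M →ₗ[O] M, (∀ g : G, f ∘ₗ ρ g = ρ g ∘ₗ f) →
      ∃ c : O, f = c • LinearMap.id := by
  classical
  intro f hf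
  set I := IsLocalRing.maximalIdeal O with hI
  obtain ⟨π, hπ⟩ := IsDiscreteValuationRing.exists_irreducible O
  have hspan : I = Ideal.span {π} :=
    (IsDiscreteValuationRing.irreducible_iff_uniformizer π).mp hπ
  have hπ0 : π ≠ 0 := hπ.ne_zero
  have hsmulinj : Function.Injective (fun x : M => π • x) :=
    smul_right_injective M hπ0
  -- key step lemma
  have step : ∀ g : M →ₗ[O] M, (∀ γ : G, g ∘ₗ ρ γ = ρ γ ∘ₗ g) →
      ∃ c : O, ∃ g' : M →ₗ[O] M, (∀ γ : G, g' ∘ₗ ρ γ = ρ γ ∘ₗ g') ∧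
        ∀ x : M, g x = c • x + π • g' x := by
    intro g hg
    set k := IsLocalRing.ResidueField O
    have hFcomm : ∀ γ : G, (g.baseChange k) ∘ₗ (ρ γ).baseChange k
        = (ρ γ).baseChange k ∘ₗ (g.baseChange k) := by
      intro γ
      rw [← LinearMap.baseChange_comp, ← LinearMap.baseChange_comp, hg γ]
    obtain ⟨c', hc'⟩ := habs (g.baseChange k) hFcomm
    obtain ⟨c, hc⟩ := Ideal.Quotient.mk_surjective c'
    set h : M →ₗ[O] M := g - c • LinearMap.id with hh
    have hhcomm : ∀ γ : G, h ∘ₗ ρ γ = ρ γ ∘ₗ h := by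
      intro γ
      ext x
      have hx := LinearMap.congr_fun (hg γ) x
      simp only [LinearMap.comp_apply] at hx
      simp [hh, map_smul, hx]
    have hmem : ∀ x : M, h x ∈ I • (⊤ : Submodule O M) := by
      intro x
      have h1 : (1 : k) ⊗ₜ[O] h x = 0 := by
        have e1 : (g.baseChange k) ((1 : k) ⊗ₜ[O] x) = (1 : k) ⊗ₜ[O] g x := by
          simp
        have e2 : (g.baseChange k) ((1 : k) ⊗ₜ[O] x) = c' • ((1 : k) ⊗ₜ[O] x) := by
          rw [hc']; rfl
        have e3 : (1 : k) ⊗ₜ[O] (c • x) = c' • ((1 : k) ⊗ₜ[O] x) := by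
          rw [tmul_smul, ← hc, ← algebraMap_smul (IsLocalRing.ResidueField O) c
            ((1 : k) ⊗ₜ[O] x)]
          rfl
        have : (1 : k) ⊗ₜ[O] h x = (1 : k) ⊗ₜ[O] g x - (1 : k) ⊗ₜ[O] (c • x) := by
          simp [hh, TensorProduct.tmul_sub]
        rw [this, ← e1, e2, e3, sub_self]
      have := congrArg (TensorProduct.quotTensorEquivQuotSMul M I) h1
      replace this := this.trans (map_zero _)
      have h2 : (TensorProduct.quotTensorEquivQuotSMul M I) ((1 : k) ⊗ₜ[O] h x)
          = Submodule.Quotient.mk (h x) := by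
        have : (1 : k) = Ideal.Quotient.mk I 1 := rfl
        rw [this, TensorProduct.quotTensorEquivQuotSMul_mk_tmul, one_smul]
      replace this := h2.symm.trans this
      exact (Submodule.Quotient.mk_eq_zero _).mp this
    -- divide by π
    have hmem' : ∀ x : M, ∃ y : M, π • y = h x := by
      intro x
      have := hmem x
      rw [hspan, Submodule.ideal_span_singleton_smul] at this
      obtain ⟨y, -, hy⟩ := Set.mem_smul_set.mp this
      exact ⟨y, hy⟩
    set T : M →ₗ[O] M := π • LinearMap.id with hT
    have hTinj : Function.Injective T := by
      intro x y hxy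
      exact hsmulinj hxy
    have hrange : ∀ x : M, h x ∈ LinearMap.range T := by
      intro x
      obtain ⟨y, hy⟩ := hmem' x
      exact ⟨y, hy⟩
    set e := LinearEquiv.ofInjective T hTinj with he
    set g' : M →ₗ[O] M := (e.symm : LinearMap.range T →ₗ[O] M) ∘ₗ
      h.codRestrict (LinearMap.range T) hrange with hg'
    have hdiv : ∀ x : M, π • g' x = h x := by
      intro x
      have : T (g' x) = h x := by
        have h1 : e (g' x) = h.codRestrict (LinearMap.range T) hrange x := by
          simp [hg']
        have := congrArg (Subtype.val) h1
        rwa [LinearEquiv.ofInjective_apply] at this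
      simpa [hT] using this
    have hg'comm : ∀ γ : G, g' ∘ₗ ρ γ = ρ γ ∘ₗ g' := by
      intro γ
      ext x
      apply hsmulinj
      show π • g' (ρ γ x) = π • (ρ γ (g' x))
      rw [hdiv, ← map_smul, hdiv]
      exact LinearMap.ext_iff.mp (hhcomm γ) x
    refine ⟨c, g', hg'comm, fun x => ?_⟩
    have := hdiv x
    rw [hh] at this
    simp only [LinearMap.sub_apply, LinearMap.smul_apply, LinearMap.id_apply] at this
    linear_combination (norm := module) this.symm
  -- recursion
  choose cst nxt hnxtcomm hnxteq using step
  set Q := {g : M →ₗ[O] M // ∀ γ : G, g ∘ₗ ρ γ = ρ γ ∘ₗ g} with hQ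
  let seq : ℕ → Q := fun n => Nat.rec ⟨f, hf⟩ (fun _ p => ⟨nxt p.1 p.2, hnxtcomm p.1 p.2⟩) n
  let cs : ℕ → O := fun n => cst (seq n).1 (seq n).2
  let s : ℕ → O := fun n => ∑ i ∈ Finset.range n, cs i * π ^ i
  have hinv : ∀ n : ℕ, ∀ x : M, f x = s n • x + π ^ n • (seq n).1 x := by
    intro n
    induction n with
    | zero =>
      intro x
      show f x = s 0 • x + π ^ 0 • f x
      simp [s]
    | succ n ih =>
      intro x
      have hstep := hnxteq (seq n).1 (seq n).2 x
      have hseq : (seq (n+1)).1 = nxt (seq n).1 (seq n).2 := rfl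
      rw [ih x, hstep, hseq]
      have hs : s (n+1) = s n + cs n * π ^ n := Finset.sum_range_succ _ _
      rw [hs]
      match_scalars <;> ring
  -- Cauchy
  have hcau : ∀ {m n : ℕ}, m ≤ n → s m ≡ s n [SMOD (I ^ m • ⊤ : Submodule O O)] := by
    intro m n hmn
    rw [SModEq.sub_mem]
    have htop : (I ^ m • ⊤ : Submodule O O) = (I ^ m : Ideal O) := by
      rw [smul_eq_mul, Ideal.mul_top]
    rw [htop]
    have : s m - s n = -∑ i ∈ Finset.Ico m n, cs i * π ^ i := by
      rw [Finset.sum_Ico_eq_sub _ hmn]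
      ring
    rw [this]
    apply neg_mem
    apply Ideal.sum_mem
    intro i hi
    apply Ideal.mul_mem_left
    have hπI : π ∈ I := by rw [hspan]; exact Ideal.mem_span_singleton_self π
    have : π ^ i ∈ I ^ i := Ideal.pow_mem_pow hπI i
    exact Ideal.pow_le_pow_right (Finset.mem_Ico.mp hi).1 this
  obtain ⟨c, hcL⟩ := IsPrecomplete.prec (IsAdicComplete.toIsPrecomplete (I := I)) hcau
  refine ⟨c, ?_⟩
  ext x
  simp only [LinearMap.smul_apply, LinearMap.id_apply]
  rw [← sub_eq_zero]
  set b := Module.Free.chooseBasis O M with hb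
  rw [← b.forall_coord_eq_zero_iff]
  intro i
  have hmemn : ∀ n : ℕ, f x - c • x ∈ (I ^ n • ⊤ : Submodule O M) := by
    intro n
    have h1 : f x - c • x = (s n - c) • x + π ^ n • (seq n).1 x := by
      rw [hinv n x]; module
    rw [h1]
    apply Submodule.add_mem
    · have : s n - c ∈ I ^ n := by
        have := hcL n
        rw [SModEq.sub_mem] at this
        rwa [smul_eq_mul, Ideal.mul_top] at this
      exact Submodule.smul_mem_smul this Submodule.mem_top
    · have hπI : π ∈ I := by rw [hspan]; exact Ideal.mem_span_singleton_self π
      exact Submodule.smul_mem_smul (Ideal.pow_mem_pow hπI n) Submodule.mem_top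
  apply IsHausdorff.haus (IsAdicComplete.toIsHausdorff (I := I))
  intro n
  rw [SModEq.zero]
  have := Submodule.mem_map_of_mem (f := b.coord i) (hmemn n)
  rw [Submodule.map_smul''] at this
  have hle : (I ^ n • (⊤ : Submodule O M).map (b.coord i) : Submodule O O)
      ≤ I ^ n • ⊤ := Submodule.smul_mono le_rfl le_top
  exact hle this
end
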